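/- Under internal validity of the RCT (T ⊥ (Y(t), S(t)) | X, G=1), strict overlap, and mean exchangeability (E[Y | X, S, T, G=1] = E[Y | X, S, T, G=0]), the average treatment effect in the RCT τ = E[Y(1) - Y(0) | G=1] is identified as τ = E[ E{h(X,S,T) | X, T=1, G=1} - E{h(X,S,T) | X, T=0, G=1} | G=1 ], where h(X,S,T) = E[Y | X, S, T, G=0] is computable from the observational data. -/

import Mathlib

open MeasureTheory ProbabilityTheory

/-- `h : β → ℝ` is (a version of) the conditional mean of `Y` given `Z` under the measure `P`. -/
def IsCondMean {Ω β : Type*} [MeasurableSpace Ω] [MeasurableSpace β]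
    (P : Measure Ω) (Z : Ω → β) (Y : Ω → ℝ) (h : β → ℝ) : Prop :=
  ∀ B : Set β, MeasurableSet B →
    ∫ ω in Z ⁻¹' B, Y ω ∂P = ∫ ω in Z ⁻¹' B, h (Z ω) ∂P

/-!
Fix an arm `t`, write `χ = 1{T = t}` and condition on `X` inside the RCT. Mean exchangeability
and the definition of `m_t` give `E[χ Y(t) | X] = E[χ m_t(X) | X] = m_t(X) E[χ | X]`. Internal
validity says that adding `Y(t)` to the conditioning does not change `E[χ | ·]`, whence
`E[χ Y(t) | X] = E[χ | X] E[Y(t) | X]`. Strict overlap makes `E[χ | X]` a.e. nonzero, so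
`m_t(X) = E[Y(t) | X]` a.e.; integrating and subtracting the two arms gives the claim.
-/

theorem Set.indicator_eq_mul_indicator_one {ι M₀ : Type*} [MulZeroOneClass M₀] (s : Set ι)
    (f : ι → M₀) : s.indicator f = f * s.indicator fun _ => 1 := by
  funext i
  by_cases hi : i ∈ s <;> simp [hi]

section Cond

variable {Ω β : Type*} [MeasurableSpace Ω] [MeasurableSpace β] {μ : Measure Ω} {s : Set Ω}

lemma setIntegral_cond {t : Set Ω} (ht : MeasurableSet t) (f : Ω → ℝ) :
    ∫ ω in t, f ω ∂μ[|s] = (μ s)⁻¹.toReal * ∫ ω in t ∩ s, f ω ∂μ := by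
  rw [ProbabilityTheory.cond, Measure.restrict_smul, integral_smul_measure,
    Measure.restrict_restrict ht, smul_eq_mul]

lemma integrable_cond_iff (h0 : μ s ≠ 0) (hfin : μ s ≠ ⊤) {f : Ω → ℝ} :
    Integrable f μ[|s] ↔ IntegrableOn f s μ :=
  integrable_smul_measure (ENNReal.inv_ne_zero.mpr hfin) (ENNReal.inv_ne_top.mpr h0)

lemma isCondMean_cond_iff [IsFiniteMeasure μ] (h0 : μ s ≠ 0) {Z : Ω → β} (hZ : Measurable Z)
    {Y : Ω → ℝ} {M : β → ℝ} :
    IsCondMean μ[|s] Z Y M ↔ ∀ B, MeasurableSet B →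
      ∫ ω in Z ⁻¹' B ∩ s, Y ω ∂μ = ∫ ω in Z ⁻¹' B ∩ s, M (Z ω) ∂μ := by
  have hc : (μ s)⁻¹.toReal ≠ 0 := ENNReal.toReal_ne_zero.mpr
    ⟨ENNReal.inv_ne_zero.mpr (measure_ne_top μ s), ENNReal.inv_ne_top.mpr h0⟩
  refine forall₂_congr fun B hB => ?_
  rw [setIntegral_cond (hZ hB), setIntegral_cond (hZ hB), mul_right_inj' hc]

end Cond

section CondMean

variable {Ω β : Type*} [mΩ : MeasurableSpace Ω] [mβ : MeasurableSpace β] {Q : Measure Ω}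
  [IsFiniteMeasure Q] {Z : Ω → β} {Y : Ω → ℝ} {M : β → ℝ}

theorem IsCondMean.comp_ae_eq_condExp (hM_ver : IsCondMean Q Z Y M) (hZ : Measurable Z)
    (hY : Integrable Y Q) (hM : Measurable M) :
    (fun ω => M (Z ω)) =ᵐ[Q] Q[Y | mβ.comap Z] := by
  have hm : mβ.comap Z ≤ mΩ := hZ.comap_le
  have hMZ : StronglyMeasurable[mβ.comap Z] (fun ω => M (Z ω)) :=
    (hM.comp (comap_measurable Z)).stronglyMeasurable
  -- `M ∘ Z` need not be integrable a priori, but it is bounded on each `Z ⁻¹' {|M| ≤ n}`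
  have htrunc : ∀ n : ℕ, (Z ⁻¹' {b | |M b| ≤ n}).indicator (fun ω => M (Z ω))
      =ᵐ[Q] (Z ⁻¹' {b | |M b| ≤ n}).indicator (Q[Y | mβ.comap Z]) := by
    intro n
    have hBn : MeasurableSet {b | |M b| ≤ n} := measurableSet_le hM.abs measurable_const
    have hsn : MeasurableSet[mβ.comap Z] (Z ⁻¹' {b | |M b| ≤ n}) := ⟨_, hBn, rfl⟩
    have hint : Integrable ((Z ⁻¹' {b | |M b| ≤ n}).indicator (fun ω => M (Z ω))) Q := by
      refine IntegrableOn.integrable_indicator ?_ (hm _ hsn)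
      exact Measure.integrableOn_of_bounded (measure_ne_top _ _)
        (hMZ.mono hm).aestronglyMeasurable
        ((ae_restrict_iff' (hm _ hsn)).2 (ae_of_all _ fun ω hω => hω))
    refine ae_eq_of_forall_setIntegral_eq_of_sigmaFinite' hm (fun _ _ _ => hint.integrableOn)
      (fun _ _ _ => (integrable_condExp.indicator (hm _ hsn)).integrableOn) ?_
      (hMZ.indicator hsn).aestronglyMeasurable
      (stronglyMeasurable_condExp.indicator hsn).aestronglyMeasurable
    rintro _ ⟨B, hB, rfl⟩ -
    rw [setIntegral_indicator (hm _ hsn), setIntegral_indicator (hm _ hsn), ← Set.preimage_inter,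
      ← hM_ver _ (hB.inter hBn), setIntegral_condExp hm hY ⟨_, hB.inter hBn, rfl⟩]
  filter_upwards [ae_all_iff.2 htrunc] with ω hω
  have hmem : ω ∈ Z ⁻¹' {b | |M b| ≤ ⌈|M (Z ω)|⌉₊} := Nat.le_ceil (|M (Z ω)|)
  simpa only [Set.indicator_of_mem hmem] using hω ⌈|M (Z ω)|⌉₊

theorem IsCondMean.integrable_comp (hM_ver : IsCondMean Q Z Y M) (hZ : Measurable Z)
    (hY : Integrable Y Q) (hM : Measurable M) : Integrable (fun ω => M (Z ω)) Q :=
  integrable_condExp.congr (hM_ver.comp_ae_eq_condExp hZ hY hM).symm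

end CondMean

theorem IsCondMean.setIntegral_preimage_inter_eq {Ω α β γ : Type*} [MeasurableSpace Ω]
    [MeasurableSpace α] [MeasurableSpace β] [MeasurableSpace γ] {μ : Measure Ω} {X : Ω → α}
    {S : Ω → β} {T : Ω → γ} {Y : Ω → ℝ} {h : α × β × γ → ℝ}
    (hh : IsCondMean μ (fun ω => (X ω, S ω, T ω)) Y h) {B : Set α} (hB : MeasurableSet B)
    {C : Set γ} (hC : MeasurableSet C) :
    ∫ ω in X ⁻¹' B ∩ T ⁻¹' C, Y ω ∂μ = ∫ ω in X ⁻¹' B ∩ T ⁻¹' C, h (X ω, S ω, T ω) ∂μ := by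
  have hpre : (fun ω => (X ω, S ω, T ω)) ⁻¹' (B ×ˢ Set.univ ×ˢ C) = X ⁻¹' B ∩ T ⁻¹' C := by
    ext; simp
  simpa only [hpre] using hh _ (hB.prod (MeasurableSet.univ.prod hC))

section PiSystem

variable {Ω E : Type*} [NormedAddCommGroup E] [NormedSpace ℝ E]

theorem isPiSystem_image2_inter (m₁ m₂ : MeasurableSpace Ω) :
    IsPiSystem (Set.image2 (· ∩ ·) {s | MeasurableSet[m₁] s} {t | MeasurableSet[m₂] t}) := by
  rintro _ ⟨s, hs, t, ht, rfl⟩ _ ⟨s', hs', t', ht', rfl⟩ -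
  exact ⟨s ∩ s', hs.inter hs', t ∩ t', ht.inter ht', Set.inter_inter_inter_comm s s' t t'⟩

theorem generateFrom_image2_inter (m₁ m₂ : MeasurableSpace Ω) :
    MeasurableSpace.generateFrom
      (Set.image2 (· ∩ ·) {s | MeasurableSet[m₁] s} {t | MeasurableSet[m₂] t}) = m₁ ⊔ m₂ := by
  refine le_antisymm (MeasurableSpace.generateFrom_le ?_) (sup_le (fun s hs => ?_) fun t ht => ?_)
  · rintro _ ⟨s, hs, t, ht, rfl⟩
    exact (le_sup_left (a := m₁) (b := m₂) s hs).inter (le_sup_right (a := m₁) (b := m₂) t ht)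
  · exact MeasurableSpace.measurableSet_generateFrom ⟨s, hs, Set.univ, .univ, Set.inter_univ s⟩
  · exact MeasurableSpace.measurableSet_generateFrom ⟨Set.univ, .univ, t, ht, Set.univ_inter t⟩

theorem setIntegral_eq_of_isPiSystem {m m₀ : MeasurableSpace Ω} {μ : Measure[m₀] Ω}
    (hm : m ≤ m₀) {C : Set (Set Ω)} (hgen : m = MeasurableSpace.generateFrom C) (hC : IsPiSystem C)
    {f g : Ω → E} (hf : Integrable f μ) (hg : Integrable g μ)
    (huniv : ∫ ω, f ω ∂μ = ∫ ω, g ω ∂μ) (hbasic : ∀ s ∈ C, ∫ ω in s, f ω ∂μ = ∫ ω in s, g ω ∂μ)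
    {s : Set Ω} (hs : MeasurableSet[m] s) :
    ∫ ω in s, f ω ∂μ = ∫ ω in s, g ω ∂μ := by
  induction s, hs using MeasurableSpace.induction_on_inter hgen hC with
  | empty => simp
  | basic s hs => exact hbasic s hs
  | compl t ht ih =>
    rw [setIntegral_compl (hm t ht) hf, setIntegral_compl (hm t ht) hg, ih, huniv]
  | iUnion s hdisj hs ih =>
    rw [integral_iUnion (fun i => hm _ (hs i)) hdisj hf.integrableOn,
      integral_iUnion (fun i => hm _ (hs i)) hdisj hg.integrableOn]
    exact tsum_congr ih

end PiSystem

namespace ProbabilityTheory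

variable {Ω β γ : Type*} {m' : MeasurableSpace Ω} {mΩ : MeasurableSpace Ω} [StandardBorelSpace Ω]
  {hm' : m' ≤ mΩ} {μ : Measure Ω} [IsFiniteMeasure μ] [MeasurableSpace β]
  [mγ : MeasurableSpace γ] {f : Ω → β} {g : Ω → γ} {A : Set β}

theorem CondIndepFun.condExp_indicator_sup_ae_eq (hind : CondIndepFun m' hm' f g μ)
    (hf : Measurable f) (hg : Measurable g) (hA : MeasurableSet A) :
    μ⟦f ⁻¹' A | m' ⊔ mγ.comap g⟧ =ᵐ[μ] μ⟦f ⁻¹' A | m'⟧ := by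
  have hm₂ : m' ⊔ mγ.comap g ≤ mΩ := sup_le hm' hg.comap_le
  have hχ : Integrable ((f ⁻¹' A).indicator fun _ => (1 : ℝ)) μ :=
    (integrable_const 1).indicator (hf hA)
  have hsm : StronglyMeasurable[m' ⊔ mγ.comap g] (μ⟦f ⁻¹' A | m'⟧) :=
    stronglyMeasurable_condExp.mono le_sup_left
  refine (ae_eq_condExp_of_forall_setIntegral_eq hm₂ hχ
    (fun _ _ _ => integrable_condExp.integrableOn) (fun s hs _ => ?_)
    hsm.aestronglyMeasurable).symm
  refine setIntegral_eq_of_isPiSystem hm₂ (generateFrom_image2_inter _ _).symm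
    (isPiSystem_image2_inter _ _) integrable_condExp hχ (integral_condExp hm') ?_ hs
  rintro _ ⟨u, hu, _, ⟨t, ht, rfl⟩, rfl⟩
  have hgt : MeasurableSet (g ⁻¹' t) := hg ht
  have hprod := (condIndepFun_iff_condExp_inter_preimage_eq_mul hf hg).1 hind A t hA ht
  have hFχ : Integrable (μ⟦f ⁻¹' A | m'⟧ * (g ⁻¹' t).indicator fun _ => (1 : ℝ)) μ := by
    rw [← Set.indicator_eq_mul_indicator_one]
    exact integrable_condExp.indicator hgt
  calc ∫ ω in u ∩ g ⁻¹' t, (μ⟦f ⁻¹' A | m'⟧) ω ∂μ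
      = ∫ ω in u, (μ⟦f ⁻¹' A | m'⟧ * (g ⁻¹' t).indicator fun _ => (1 : ℝ)) ω ∂μ := by
        rw [← setIntegral_indicator hgt, Set.indicator_eq_mul_indicator_one]
    _ = ∫ ω in u, μ[μ⟦f ⁻¹' A | m'⟧ * (g ⁻¹' t).indicator fun _ => (1 : ℝ) | m'] ω ∂μ :=
        (setIntegral_condExp hm' hFχ hu).symm
    _ = ∫ ω in u, (μ⟦f ⁻¹' A ∩ g ⁻¹' t | m'⟧) ω ∂μ := by
        refine integral_congr_ae (ae_restrict_of_ae ?_)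
        filter_upwards [condExp_mul_of_stronglyMeasurable_left stronglyMeasurable_condExp hFχ
          ((integrable_const 1).indicator hgt), hprod] with ω h₁ h₂
        rw [h₁, h₂, Pi.mul_apply]
    _ = ∫ ω in u ∩ g ⁻¹' t, (f ⁻¹' A).indicator (fun _ => (1 : ℝ)) ω ∂μ := by
        rw [setIntegral_condExp hm' ((integrable_const 1).indicator ((hf hA).inter hgt)) hu,
          Set.inter_comm, ← Set.indicator_indicator, setIntegral_indicator hgt]

variable {V : Ω → ℝ}

theorem CondIndepFun.condExp_indicator_ae_eq_mul (hind : CondIndepFun m' hm' f V μ)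
    (hf : Measurable f) (hV : Measurable V) (hVint : Integrable V μ) (hA : MeasurableSet A) :
    μ[(f ⁻¹' A).indicator V | m'] =ᵐ[μ] μ⟦f ⁻¹' A | m'⟧ * μ[V | m'] := by
  have hm₂ : m' ⊔ MeasurableSpace.comap V inferInstance ≤ mΩ := sup_le hm' hV.comap_le
  have hχ : Integrable ((f ⁻¹' A).indicator fun _ => (1 : ℝ)) μ :=
    (integrable_const 1).indicator (hf hA)
  have hVχ : Integrable (V * (f ⁻¹' A).indicator fun _ => (1 : ℝ)) μ := by
    rw [← Set.indicator_eq_mul_indicator_one]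
    exact hVint.indicator (hf hA)
  have hVm₂ : StronglyMeasurable[m' ⊔ MeasurableSpace.comap V inferInstance] V :=
    ((comap_measurable V).mono (le_sup_right (a := m')) le_rfl).stronglyMeasurable
  have hsup : μ[(f ⁻¹' A).indicator V | m' ⊔ MeasurableSpace.comap V inferInstance]
      =ᵐ[μ] V * μ⟦f ⁻¹' A | m'⟧ := by
    rw [Set.indicator_eq_mul_indicator_one]
    filter_upwards [condExp_mul_of_stronglyMeasurable_left hVm₂ hVχ hχ,
      hind.condExp_indicator_sup_ae_eq hf hV hA] with ω h₁ h₂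
    rw [h₁, Pi.mul_apply, h₂, Pi.mul_apply]
  have hVp : Integrable (V * μ⟦f ⁻¹' A | m'⟧) μ := integrable_condExp.congr hsup
  calc μ[(f ⁻¹' A).indicator V | m']
      =ᵐ[μ] μ[μ[(f ⁻¹' A).indicator V | m' ⊔ MeasurableSpace.comap V inferInstance] | m'] :=
        (condExp_condExp_of_le le_sup_left hm₂).symm
    _ =ᵐ[μ] μ[μ⟦f ⁻¹' A | m'⟧ * V | m'] := by
        rw [mul_comm]
        exact condExp_congr_ae hsup
    _ =ᵐ[μ] μ⟦f ⁻¹' A | m'⟧ * μ[V | m'] :=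
        condExp_mul_of_stronglyMeasurable_left stronglyMeasurable_condExp
          (by rw [mul_comm]; exact hVp) hVint

theorem CondIndepFun.ae_eq_condExp_of_setIntegral_indicator_eq (hind : CondIndepFun m' hm' f V μ)
    (hf : Measurable f) (hV : Measurable V) (hVint : Integrable V μ) (hA : MeasurableSet A)
    (hprop : ∀ᵐ ω ∂μ, (μ⟦f ⁻¹' A | m'⟧) ω ≠ 0) {F : Ω → ℝ} (hF : StronglyMeasurable[m'] F)
    (hFint : Integrable ((f ⁻¹' A).indicator F) μ)
    (hVF : ∀ s, MeasurableSet[m'] s →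
      ∫ ω in s, (f ⁻¹' A).indicator V ω ∂μ = ∫ ω in s, (f ⁻¹' A).indicator F ω ∂μ) :
    F =ᵐ[μ] μ[V | m'] := by
  have hχ : Integrable ((f ⁻¹' A).indicator fun _ => (1 : ℝ)) μ :=
    (integrable_const 1).indicator (hf hA)
  have hFV : μ[(f ⁻¹' A).indicator F | m'] =ᵐ[μ] μ[(f ⁻¹' A).indicator V | m'] :=
    ae_eq_condExp_of_forall_setIntegral_eq hm' (hVint.indicator (hf hA))
      (fun _ _ _ => integrable_condExp.integrableOn)
      (fun s hs _ => (setIntegral_condExp hm' hFint hs).trans (hVF s hs).symm)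
      stronglyMeasurable_condExp.aestronglyMeasurable
  have hpull : μ[(f ⁻¹' A).indicator F | m'] =ᵐ[μ] F * μ⟦f ⁻¹' A | m'⟧ := by
    rw [Set.indicator_eq_mul_indicator_one] at hFint ⊢
    exact condExp_mul_of_stronglyMeasurable_left hF hFint hχ
  filter_upwards [hpull, hFV, hind.condExp_indicator_ae_eq_mul hf hV hVint hA, hprop]
    with ω h₁ h₂ h₃ hne
  rw [h₁, h₃] at h₂
  exact mul_right_cancel₀ hne (h₂.trans (mul_comm _ _))

end ProbabilityTheory

section Identification

variable {Ω α : Type*} [MeasurableSpace Ω] [mα : MeasurableSpace α] {μ : Measure Ω}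
  [IsFiniteMeasure μ] {X : Ω → α} {T : Ω → ℝ}

theorem condExp_indicator_ne_zero_of_overlap (hX : Measurable X) (hT : Measurable T)
    (hTbin : ∀ ω, T ω = 0 ∨ T ω = 1) {e : α → ℝ} (he : Measurable e)
    (he_ver : IsCondMean μ X T e) {ε : ℝ} (hε : 0 < ε)
    (he_bdd : ∀ ω, ε ≤ e (X ω) ∧ e (X ω) ≤ 1 - ε) {t : ℝ} (ht : t = 0 ∨ t = 1) :
    ∀ᵐ ω ∂μ, (μ⟦T ⁻¹' {t} | mα.comap X⟧) ω ≠ 0 := by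
  have hT1 : (T ⁻¹' {1}).indicator (fun _ => (1 : ℝ)) = T := by
    funext ω
    rcases hTbin ω with h | h <;> simp [h]
  have hT0 : (T ⁻¹' {0}).indicator (fun _ => (1 : ℝ)) = (fun _ => 1) - T := by
    funext ω
    rcases hTbin ω with h | h <;> simp [h]
  have hTint : Integrable T μ :=
    hT1 ▸ (integrable_const 1).indicator (hT (measurableSet_singleton 1))
  have he_ae := he_ver.comp_ae_eq_condExp hX hTint he
  rcases ht with rfl | rfl
  · rw [hT0]
    filter_upwards [condExp_sub (integrable_const 1) hTint (mα.comap X), he_ae] with ω h₁ h₂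
    rw [h₁, Pi.sub_apply, condExp_const hX.comap_le, ← h₂]
    linarith [he_bdd ω]
  · rw [hT1]
    filter_upwards [he_ae] with ω h
    rw [← h]
    linarith [he_bdd ω]

theorem comp_ae_eq_condExp_of_isCondMean_cond [StandardBorelSpace Ω] (hX : Measurable X)
    (hT : Measurable T) {t : ℝ} {Y Yt H : Ω → ℝ} {m : α → ℝ} (hYt : Measurable Yt)
    (hYtint : Integrable Yt μ)
    (hind : CondIndepFun (mα.comap X) hX.comap_le T Yt μ)
    (hprop : ∀ᵐ ω ∂μ, (μ⟦T ⁻¹' {t} | mα.comap X⟧) ω ≠ 0)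
    (hcons : ∀ ω, T ω = t → Y ω = Yt ω)
    (hYH : ∀ B, MeasurableSet B →
      ∫ ω in X ⁻¹' B ∩ T ⁻¹' {t}, Y ω ∂μ = ∫ ω in X ⁻¹' B ∩ T ⁻¹' {t}, H ω ∂μ)
    (hHint : Integrable H μ) (hμt : μ (T ⁻¹' {t}) ≠ 0)
    (hm : Measurable m) (hm_ver : IsCondMean μ[|T ⁻¹' {t}] X H m) :
    (fun ω => m (X ω)) =ᵐ[μ] μ[Yt | mα.comap X] := by
  have ht : MeasurableSet (T ⁻¹' {t}) := hT (measurableSet_singleton t)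
  have hmint : IntegrableOn (fun ω => m (X ω)) (T ⁻¹' {t}) μ :=
    (integrable_cond_iff hμt (measure_ne_top μ _)).1 (hm_ver.integrable_comp hX
      ((integrable_cond_iff hμt (measure_ne_top μ _)).2 hHint.integrableOn) hm)
  refine hind.ae_eq_condExp_of_setIntegral_indicator_eq hT hYt hYtint (measurableSet_singleton t)
    hprop (hm.comp (comap_measurable X)).stronglyMeasurable (hmint.integrable_indicator ht) ?_
  rintro _ ⟨B, hB, rfl⟩
  rw [setIntegral_indicator ht, setIntegral_indicator ht,
    ← (isCondMean_cond_iff hμt hX).1 hm_ver B hB, ← hYH B hB]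
  exact setIntegral_congr_fun ((hX hB).inter ht) fun ω hω => (hcons ω hω.2).symm

end Identification

theorem ate_identification_general
    {Ω : Type*} [MeasurableSpace Ω] [StandardBorelSpace Ω]
    {α β : Type*} [mα : MeasurableSpace α] [mβ : MeasurableSpace β]
    (P : Measure Ω) [IsProbabilityMeasure P]
    (X : Ω → α) (S0 S1 : Ω → β) (T G Y0 Y1 : Ω → ℝ)
    (S : Ω → β) (Y : Ω → ℝ)
    (hYcons : ∀ ω, Y ω = if T ω = 1 then Y1 ω else Y0 ω)
    (hX : Measurable X)
    (hT : Measurable T) (hG : Measurable G) (hY0 : Measurable Y0) (hY1 : Measurable Y1)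
    (hTbin : ∀ ω, T ω = 0 ∨ T ω = 1)
    (hpos : ∀ tv gv : ℝ, tv ∈ ({0, 1} : Set ℝ) → gv ∈ ({0, 1} : Set ℝ) →
      P ({ω | T ω = tv} ∩ G ⁻¹' {gv}) ≠ 0)
    (hY0int : Integrable Y0 P) (hY1int : Integrable Y1 P)
    -- Assumption 1 (internal validity): `T ⊥ (Y(t), S(t)) | X` within `G = 1`
    (hiv0 : CondIndepFun (MeasurableSpace.comap X mα) hX.comap_le
      T (fun ω => (Y0 ω, S0 ω)) (P[|G ⁻¹' {1}]))
    (hiv1 : CondIndepFun (MeasurableSpace.comap X mα) hX.comap_le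
      T (fun ω => (Y1 ω, S1 ω)) (P[|G ⁻¹' {1}]))
    -- Assumption 2 (strict overlap)
    (ε : ℝ) (hε : 0 < ε)
    (e : α → ℝ) (he : Measurable e)
    (he_ver : IsCondMean (P[|G ⁻¹' {1}]) X T e)  -- `e(x) = P(T=1 | X=x, G=1)`
    (he_bdd : ∀ ω, ε ≤ e (X ω) ∧ e (X ω) ≤ 1 - ε)
    -- Assumption 3 (mean exchangeability): `h(x,s,t) = E[Y | X=x, S=s, T=t, G=0]` is also a
    -- version of `E[Y | X, S, T, G=1]`
    (h : α × β × ℝ → ℝ)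
    (hh1 : IsCondMean (P[|G ⁻¹' {1}]) (fun ω => (X ω, S ω, T ω)) Y h)
    (hhint : Integrable (fun ω => h (X ω, S ω, T ω)) (P[|G ⁻¹' {1}]))
    -- `m_t(x) = E[h(X,S,T) | X=x, T=t, G=1]`
    (m1 m0 : α → ℝ) (hm1 : Measurable m1) (hm0 : Measurable m0)
    (hm1_ver : IsCondMean (P[|{ω | T ω = 1} ∩ G ⁻¹' {1}]) X
      (fun ω => h (X ω, S ω, T ω)) m1)
    (hm0_ver : IsCondMean (P[|{ω | T ω = 0} ∩ G ⁻¹' {1}]) X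
      (fun ω => h (X ω, S ω, T ω)) m0) :
    ∫ ω, (Y1 ω - Y0 ω) ∂(P[|G ⁻¹' {1}])
      = ∫ ω, (m1 (X ω) - m0 (X ω)) ∂(P[|G ⁻¹' {1}]) := by
  have hG1 : MeasurableSet (G ⁻¹' {1}) := hG (measurableSet_singleton 1)
  have hPG1 : P (G ⁻¹' {1}) ≠ 0 := fun h0 =>
    hpos 1 1 (by simp) (by simp) (measure_mono_null Set.inter_subset_right h0)
  set μ := P[|G ⁻¹' {1}]
  have hμT : ∀ t ∈ ({0, 1} : Set ℝ), μ (T ⁻¹' {t}) ≠ 0 := fun t ht =>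
    (cond_pos_of_inter_ne_zero hG1 (by rw [Set.inter_comm]; exact hpos t 1 ht (by simp))).ne'
  have hcond : ∀ t, P[|{ω | T ω = t} ∩ G ⁻¹' {1}] = μ[|T ⁻¹' {t}] := fun t => by
    rw [cond_cond_eq_cond_inter hG1 (hT (measurableSet_singleton t)), Set.inter_comm]
    rfl
  have hYH := fun t B (hB : MeasurableSet B) =>
    hh1.setIntegral_preimage_inter_eq hB (measurableSet_singleton t)
  have hY1μ : Integrable Y1 μ :=
    (integrable_cond_iff hPG1 (measure_ne_top _ _)).2 hY1int.integrableOn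
  have hY0μ : Integrable Y0 μ :=
    (integrable_cond_iff hPG1 (measure_ne_top _ _)).2 hY0int.integrableOn
  have harm1 := comp_ae_eq_condExp_of_isCondMean_cond hX hT hY1 hY1μ
    (hiv1.comp measurable_id measurable_fst)
    (condExp_indicator_ne_zero_of_overlap hX hT hTbin he he_ver hε he_bdd (.inr rfl))
    (fun ω hω => by rw [hYcons, if_pos hω]) (hYH 1) hhint (hμT 1 (by simp)) hm1 (hcond 1 ▸ hm1_ver)
  have harm0 := comp_ae_eq_condExp_of_isCondMean_cond hX hT hY0 hY0μ
    (hiv0.comp measurable_id measurable_fst)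
    (condExp_indicator_ne_zero_of_overlap hX hT hTbin he he_ver hε he_bdd (.inl rfl))
    (fun ω hω => by rw [hYcons, if_neg (by rw [hω]; norm_num)]) (hYH 0) hhint (hμT 0 (by simp))
    hm0 (hcond 0 ▸ hm0_ver)
  calc ∫ ω, (Y1 ω - Y0 ω) ∂μ = ∫ ω, (μ[Y1 - Y0 | mα.comap X]) ω ∂μ :=
        (integral_condExp hX.comap_le).symm
    _ = ∫ ω, ((μ[Y1 | mα.comap X]) ω - (μ[Y0 | mα.comap X]) ω) ∂μ :=
        integral_congr_ae (condExp_sub hY1μ hY0μ _)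
    _ = ∫ ω, (m1 (X ω) - m0 (X ω)) ∂μ := integral_congr_ae (harm1.sub harm0).symm

/-- **Proposition 1 (identification).** Under internal validity of the RCT
(`T ⊥ (Y(t), S(t)) | X, G=1`), strict overlap, and mean exchangeability
(`E[Y | X, S, T, G=1] = E[Y | X, S, T, G=0]`, expressed by saying that the function
`h(x,s,t) = E[Y | X=x, S=s, T=t, G=0]`, computable from the observational data, is also a version
of `E[Y | X, S, T, G=1]`), the average treatment effect in the RCT
`τ = E[Y(1) - Y(0) | G=1]` is identified as
`τ = E[ E{h(X,S,T) | X, T=1, G=1} - E{h(X,S,T) | X, T=0, G=1} | G=1 ]`. -/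
theorem ate_identification
    {Ω : Type*} [MeasurableSpace Ω] [StandardBorelSpace Ω] [Nonempty Ω]
    {α β : Type*} [mα : MeasurableSpace α] [mβ : MeasurableSpace β]
    (P : Measure Ω) [IsProbabilityMeasure P]
    (X : Ω → α) (S0 S1 : Ω → β) (T G Y0 Y1 : Ω → ℝ)
    (S : Ω → β) (Y : Ω → ℝ)
    (hScons : ∀ ω, S ω = if T ω = 1 then S1 ω else S0 ω)
    (hYcons : ∀ ω, Y ω = if T ω = 1 then Y1 ω else Y0 ω)
    (hX : Measurable X) (hS0 : Measurable S0) (hS1 : Measurable S1)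
    (hT : Measurable T) (hG : Measurable G) (hY0 : Measurable Y0) (hY1 : Measurable Y1)
    (hTbin : ∀ ω, T ω = 0 ∨ T ω = 1) (hGbin : ∀ ω, G ω = 0 ∨ G ω = 1)
    (hpos : ∀ tv gv : ℝ, tv ∈ ({0, 1} : Set ℝ) → gv ∈ ({0, 1} : Set ℝ) →
      P ({ω | T ω = tv} ∩ G ⁻¹' {gv}) ≠ 0)
    (hY0int : Integrable Y0 P) (hY1int : Integrable Y1 P)
    -- Assumption 1 (internal validity): `T ⊥ (Y(t), S(t)) | X` within `G = 1`
    (hiv0 : CondIndepFun (MeasurableSpace.comap X mα) hX.comap_le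
      T (fun ω => (Y0 ω, S0 ω)) (P[|G ⁻¹' {1}]))
    (hiv1 : CondIndepFun (MeasurableSpace.comap X mα) hX.comap_le
      T (fun ω => (Y1 ω, S1 ω)) (P[|G ⁻¹' {1}]))
    -- Assumption 2 (strict overlap)
    (ε : ℝ) (hε : 0 < ε) (hε' : ε < 1 / 2)
    (e : α → ℝ) (he : Measurable e)
    (he_ver : IsCondMean (P[|G ⁻¹' {1}]) X T e)  -- `e(x) = P(T=1 | X=x, G=1)`
    (he_bdd : ∀ ω, ε ≤ e (X ω) ∧ e (X ω) ≤ 1 - ε)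
    (π0 : α × β → ℝ) (hπ0 : Measurable π0)
    (hπ0_ver : IsCondMean P (fun ω => (X ω, S ω)) (fun ω => 1 - G ω) π0)
      -- `π0(x,s) = P(G=0 | X=x, S=s)`
    (hπ0_bdd : ∀ᵐ ω ∂(P[|G ⁻¹' {1}]), ε ≤ π0 (X ω, S ω))
    -- Assumption 3 (mean exchangeability): `h(x,s,t) = E[Y | X=x, S=s, T=t, G=0]` is also a
    -- version of `E[Y | X, S, T, G=1]`
    (h : α × β × ℝ → ℝ) (hh : Measurable h)
    (hh0 : IsCondMean (P[|G ⁻¹' {0}]) (fun ω => (X ω, S ω, T ω)) Y h)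
    (hh1 : IsCondMean (P[|G ⁻¹' {1}]) (fun ω => (X ω, S ω, T ω)) Y h)
    (hhint : Integrable (fun ω => h (X ω, S ω, T ω)) (P[|G ⁻¹' {1}]))
    -- `m_t(x) = E[h(X,S,T) | X=x, T=t, G=1]`
    (m1 m0 : α → ℝ) (hm1 : Measurable m1) (hm0 : Measurable m0)
    (hm1_ver : IsCondMean (P[|{ω | T ω = 1} ∩ G ⁻¹' {1}]) X
      (fun ω => h (X ω, S ω, T ω)) m1)
    (hm0_ver : IsCondMean (P[|{ω | T ω = 0} ∩ G ⁻¹' {1}]) X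
      (fun ω => h (X ω, S ω, T ω)) m0)
    (hmint : Integrable (fun ω => m1 (X ω) - m0 (X ω)) (P[|G ⁻¹' {1}])) :
    ∫ ω, (Y1 ω - Y0 ω) ∂(P[|G ⁻¹' {1}])
      = ∫ ω, (m1 (X ω) - m0 (X ω)) ∂(P[|G ⁻¹' {1}]) :=
  ate_identification_general (mα := mα) (mβ := mβ) P X S0 S1 T G Y0 Y1 S Y hYcons hX hT hG hY0 hY1
    hTbin hpos hY0int hY1int hiv0 hiv1 ε hε e he he_ver he_bdd h hh1 hhint m1 m0 hm1 hm0 hm1_ver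
    hm0_ver
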